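/- arXiv:2505.12032 — 5 statements merged into one kernel-verified Lean document; each statement's English description precedes it below -/
import Mathlib

section
/- Let A and P be positive even integers. There exist positive integers b, u and a positive rational t such that b·t = P, 2b + 2u = A, and u ≥ t, if and only if A² ≥ 16P. -/
theorem companion_iff (A P : ℕ) (hA : 0 < A) (hP : 0 < P)
    (hAe : Even A) (hPe : Even P) :
    (∃ (b u : ℕ) (t : ℚ), 0 < b ∧ 0 < u ∧ 0 < t ∧ t ≤ (u : ℚ) ∧
      (b : ℚ) * t = P ∧ 2 * b + 2 * u = A) ↔ A ^ 2 ≥ 16 * P := by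
  constructor
  · rintro ⟨b, u, t, hb, hu, ht, htu, hbt, hA2⟩
    -- P = b*t ≤ b*u, A = 2b+2u
    have hb' : (0:ℚ) < b := by exact_mod_cast hb
    have hPle : (P:ℚ) ≤ (b:ℚ) * u := by
      calc (P:ℚ) = b * t := hbt.symm
        _ ≤ b * u := by nlinarith
    have hAq : (A:ℚ) = 2 * b + 2 * u := by exact_mod_cast hA2.symm
    have : (16:ℚ) * P ≤ (A:ℚ) ^ 2 := by nlinarith [sq_nonneg ((b:ℚ) - u)]
    exact_mod_cast this
  · intro h
    obtain ⟨m, hm⟩ := hAe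
    have hm' : A = 2 * m := by omega
    have hmm : 4 * P ≤ m * m := by nlinarith [h]
    have hm2 : 2 ≤ m := by nlinarith
    rcases Nat.even_or_odd m with ⟨k, hk⟩ | ⟨k, hk⟩
    · -- m = 2k, b = u = k
      have hk1 : 1 ≤ k := by omega
      have hku : P ≤ k * k := by nlinarith
      refine ⟨k, k, (P : ℚ) / k, by omega, by omega, ?_, ?_, ?_, by omega⟩
      · positivity
      · rw [div_le_iff₀ (by positivity)]
        exact_mod_cast hku
      · field_simp
    · -- m = 2k+1, b = k, u = k+1
      have hk1 : 1 ≤ k := by omega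
      have hku : P ≤ k * (k + 1) := by nlinarith
      refine ⟨k, k + 1, (P : ℚ) / k, by omega, by omega, ?_, ?_, ?_, by omega⟩
      · positivity
      · rw [div_le_iff₀ (by positivity)]
        have hq : (P:ℚ) ≤ (k:ℚ) * ((k:ℚ) + 1) := by exact_mod_cast hku
        push_cast
        nlinarith [hq]
      · field_simp
end

section
/- Let a, h, s be positive integers with h ≤ s, A = a·h, P = 2a + 2s. If A is even and A² ≥ 16P, then there exist positive integers b, u and a positive rational t with t ≤ u, b·t = P, and 2b + 2u = A. -/
theorem sufficiency (a h s : ℕ) (ha : 0 < a) (hh : 0 < h) (hs : 0 < s) (hhs : h ≤ s)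
    (A P : ℕ) (hA : A = a * h) (hP : P = 2 * a + 2 * s)
    (hAe : Even A) (hge : A ^ 2 ≥ 16 * P) :
    ∃ (b u : ℕ) (t : ℚ), 0 < b ∧ 0 < u ∧ 0 < t ∧ t ≤ (u : ℚ) ∧
      (b : ℚ) * t = P ∧ 2 * b + 2 * u = A := by
  have hP4 : 4 ≤ P := by omega
  have hA8 : 8 ≤ A := by
    by_contra hc
    push_neg at hc
    interval_cases A <;> omega
  have hPpos : (0:ℚ) < P := by exact_mod_cast (by omega : 0 < P)
  obtain ⟨m, hm⟩ := hAe
  rcases Nat.even_or_odd (A / 2) with he | ho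
  · -- A = 4k
    obtain ⟨k, hk⟩ := he
    have hAk : A = 4 * k := by omega
    have hk2 : 2 ≤ k := by omega
    have hkQ : (0:ℚ) < k := by exact_mod_cast (by omega : 0 < k)
    refine ⟨k, k, (P : ℚ) / k, by omega, by omega, by positivity, ?_, ?_, by omega⟩
    · rw [div_le_iff₀ hkQ]
      have : P ≤ k * k := by nlinarith [hge, hAk]
      exact_mod_cast this
    · field_simp
  · -- A = 4k + 2
    have hAk : ∃ k, A = 4 * k + 2 := by
      obtain ⟨j, hj⟩ := ho
      exact ⟨j, by omega⟩
    obtain ⟨k, hk⟩ := hAk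
    have hk2 : 2 ≤ k := by omega
    have hkQ : (0:ℚ) < (k:ℚ) + 1 := by positivity
    refine ⟨k + 1, k, (P : ℚ) / (k + 1), by omega, by omega, by positivity, ?_, ?_, by omega⟩
    · rw [div_le_iff₀ hkQ]
      have hnat : P ≤ k * (k + 1) := by nlinarith [hge, hk]
      have : (P:ℚ) ≤ (k:ℚ) * ((k:ℚ) + 1) := by exact_mod_cast hnat
      linarith
    · push_cast
      field_simp
end

section
/- Whether a Heronian parallelogram (given by base a, side s, height h with h ≤ s, all making A = a·h and P = 2a+2s) admits an amicable companion depends only on A and P: it does if and only if A is even and A² ≥ 16P. -/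
structure Para where
  a : ℚ
  s : ℚ
  t : ℚ
  ha : 0 < a
  hs : 0 < s
  ht : 0 < t
  hts : t ≤ s

def Para.area (X : Para) : ℚ := X.a * X.t

def Para.perim (X : Para) : ℚ := 2 * X.a + 2 * X.s

def IsHeronian (X : Para) : Prop :=
  (∃ n : ℕ, (n : ℚ) = X.a) ∧ (∃ n : ℕ, (n : ℚ) = X.s) ∧ (∃ n : ℕ, (n : ℚ) = X.area)

lemma half_split_key (m : ℕ) : 4 * ((m / 2) * (m - m / 2)) + m % 2 = m * m := by
  rcases Nat.even_or_odd m with ⟨k, hk⟩ | ⟨k, hk⟩ <;> subst hk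
  · have h1 : (k + k) / 2 = k := by omega
    have h2 : (k + k) % 2 = 0 := by omega
    have h3 : (k + k) - k = k := by omega
    rw [h1, h3, h2]; ring
  · have h1 : (2 * k + 1) / 2 = k := by omega
    have h2 : (2 * k + 1) % 2 = 1 := by omega
    rw [h1, h2]
    have h3 : (2 * k + 1) - k = k + 1 := by omega
    rw [h3]; ring

theorem amicable_characterization (X : Para) (hX : IsHeronian X) :
    (∃ Y : Para, IsHeronian Y ∧ X.area = Y.perim ∧ Y.area = X.perim) ↔
    (∃ A : ℕ, (A : ℚ) = X.area ∧ Even A ∧ (A : ℚ) ^ 2 ≥ 16 * X.perim) := by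
  obtain ⟨⟨na, hna⟩, ⟨ns, hns⟩, ⟨nar, hnar⟩⟩ := hX
  have hperim : X.perim = ((2 * (na + ns) : ℕ) : ℚ) := by
    simp only [Para.perim]; push_cast; rw [hna, hns]; ring
  have hna1 : 1 ≤ na := by
    have : (0:ℚ) < (na:ℚ) := hna ▸ X.ha
    exact_mod_cast this
  have hns1 : 1 ≤ ns := by
    have : (0:ℚ) < (ns:ℚ) := hns ▸ X.hs
    exact_mod_cast this
  have hPpos : 0 < X.perim := by
    simp only [Para.perim]; nlinarith [X.ha, X.hs]
  constructor
  · rintro ⟨Y, ⟨⟨ya, hya⟩, ⟨ys, hys⟩, -⟩, h1, h2⟩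
    refine ⟨2 * (ya + ys), ?_, ⟨ya + ys, by ring⟩, ?_⟩
    · rw [h1]; simp only [Para.perim]; push_cast; rw [hya, hys]; ring
    · have hAq : ((2 * (ya + ys) : ℕ) : ℚ) = 2 * Y.a + 2 * Y.s := by
        push_cast; rw [hya, hys]; ring
      rw [← h2]
      simp only [Para.area]
      rw [hAq]
      nlinarith [sq_nonneg (Y.a - Y.s), mul_le_mul_of_nonneg_left Y.hts Y.ha.le,
        Y.ha, Y.hs, Y.ht]
  · rintro ⟨A, hA, ⟨m, hm⟩, hineq⟩
    set p := na + ns with hp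
    have hAm : A = 2 * m := by omega
    have hnat : 8 * p ≤ m * m := by
      have h1 : ((A * A : ℕ) : ℚ) ≥ ((32 * p : ℕ) : ℚ) := by
        push_cast
        have hAA : (A:ℚ) * A = (A:ℚ)^2 := by ring
        rw [hAA]
        rw [hperim] at hineq
        push_cast at hineq ⊢
        linarith
      have h2 : 32 * p ≤ A * A := by exact_mod_cast h1
      have h3 : A * A = 4 * (m * m) := by rw [hAm]; ring
      omega
    have hp2 : 2 ≤ p := by omega
    have hm4 : 4 ≤ m := by nlinarith
    set q := m / 2 with hqdef
    have hq2 : 2 ≤ q := by omega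
    have hqm : q ≤ m := Nat.div_le_self _ _
    have hkey := half_split_key m
    have hqs : 2 * p ≤ q * (m - q) := by
      obtain ⟨x, hx⟩ : ∃ x, x = q * (m - q) := ⟨_, rfl⟩
      obtain ⟨y, hy⟩ : ∃ y, y = m * m := ⟨_, rfl⟩
      rw [← hx, ← hy] at hkey
      rw [← hy] at hnat
      rw [← hx]
      omega
    have hqpos : (0:ℚ) < (q:ℚ) := by exact_mod_cast Nat.lt_of_lt_of_le (by norm_num) hq2
    have hspos : (0:ℚ) < ((m - q : ℕ):ℚ) := by
      have : 1 ≤ m - q := by omega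
      exact_mod_cast Nat.lt_of_lt_of_le (by norm_num) this
    have hts : X.perim / (q:ℚ) ≤ ((m - q : ℕ):ℚ) := by
      rw [div_le_iff₀ hqpos]
      have : X.perim ≤ ((q * (m - q) : ℕ) : ℚ) := by
        rw [hperim]
        exact_mod_cast hqs
      push_cast at this
      linarith
    refine ⟨⟨(q:ℚ), ((m - q : ℕ):ℚ), X.perim / (q:ℚ), hqpos, hspos,
      div_pos hPpos hqpos, hts⟩, ⟨⟨q, rfl⟩, ⟨m - q, rfl⟩, ⟨2 * (na + ns), ?_⟩⟩, ?_, ?_⟩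
    · simp only [Para.area]
      rw [mul_div_cancel₀ _ (ne_of_gt hqpos)]
      rw [hperim]
    · simp only [Para.perim]
      rw [← hA]
      have hms : ((m - q : ℕ):ℚ) = (m:ℚ) - (q:ℚ) := by
        push_cast [Nat.cast_sub hqm]; ring
      rw [hms]
      push_cast [hAm]
      ring
    · simp only [Para.area]
      rw [mul_div_cancel₀ _ (ne_of_gt hqpos)]
end

section
/- For every integer n > 3, the rectangle H_n with base L_n and height 2F_n (area 2F_{2n}, perimeter 2F_{n+3}) and the parallelogram C_n with base F_{2n-2}, side F_{2n-1}, and height 2F_{n+3}/F_{2n-2} form an amicable pair: area(H_n) = perimeter(C_n) and area(C_n) = perimeter(H_n); moreover C_n is a valid parallelogram since its height 2F_{n+3}/F_{2n-2} is at most its side F_{2n-1}. -/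
def lucas : ℕ → ℕ
  | 0 => 2
  | 1 => 1
  | n + 2 => lucas n + lucas (n + 1)

lemma lucas_fib : ∀ m : ℕ, lucas (m+1) = Nat.fib m + Nat.fib (m+2) ∧
    lucas (m+2) = Nat.fib (m+1) + Nat.fib (m+3) := by
  intro m
  induction m with
  | zero => decide
  | succ k ih =>
      refine ⟨ih.2, ?_⟩
      show lucas (k+1) + lucas (k+2) = _
      rw [ih.1, ih.2]
      simp [Nat.fib_add_two]
      ring

theorem fibonacci_amicable_pair (n : ℕ) (hn : n > 3) :
    ∃ H C : Para,
      H.a = (lucas n : ℚ) ∧ H.s = (2 * Nat.fib n : ℚ) ∧ H.t = (2 * Nat.fib n : ℚ) ∧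
      C.a = (Nat.fib (2 * n - 2) : ℚ) ∧ C.s = (Nat.fib (2 * n - 1) : ℚ) ∧
      C.t = (2 * Nat.fib (n + 3) : ℚ) / (Nat.fib (2 * n - 2) : ℚ) ∧
      IsHeronian H ∧ IsHeronian C ∧
      H.area = (2 * Nat.fib (2 * n) : ℚ) ∧ H.perim = (2 * Nat.fib (n + 3) : ℚ) ∧
      H.area = C.perim ∧ C.area = H.perim ∧
      C.t ≤ C.s := by
  obtain ⟨k, rfl⟩ : ∃ k, n = k + 4 := ⟨n - 4, by omega⟩
  simp only [show 2*(k+4)-2 = 2*k+6 from by omega, show 2*(k+4)-1 = 2*k+7 from by omega,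
    show 2*(k+4) = 2*k+8 from by omega, show k+4+3 = k+7 from by omega]
  -- Nat-level facts
  have hlucas : lucas (k+4) = Nat.fib (k+3) + Nat.fib (k+5) := (lucas_fib (k+3)).1
  have hL : lucas (k+4) * Nat.fib (k+4) = Nat.fib (2*k+8) := by
    have := Nat.fib_add (k+3) (k+4)
    rw [show k+3+(k+4)+1 = 2*k+8 from by omega] at this
    rw [hlucas, this, show k+3+1 = k+4 from rfl, show k+4+1 = k+5 from rfl]
    ring
  have hP : 2 * lucas (k+4) + 2 * (2 * Nat.fib (k+4)) = 2 * Nat.fib (k+7) := by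
    rw [hlucas]
    simp [Nat.fib_add_two]
    ring
  have hC : Nat.fib (2*k+6) + Nat.fib (2*k+7) = Nat.fib (2*k+8) :=
    (Nat.fib_add_two).symm
  -- positivity, casts
  have hapos : (0:ℚ) < Nat.fib (2*k+6) := by
    exact_mod_cast Nat.fib_pos.mpr (by omega)
  have hane : (Nat.fib (2*k+6) : ℚ) ≠ 0 := ne_of_gt hapos
  have hLq : (lucas (k+4) : ℚ) * Nat.fib (k+4) = Nat.fib (2*k+8) := by exact_mod_cast hL
  have hPq : 2 * (lucas (k+4):ℚ) + 2 * (2 * Nat.fib (k+4)) = 2 * Nat.fib (k+7) := by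
    exact_mod_cast hP
  have hCq : (Nat.fib (2*k+6):ℚ) + Nat.fib (2*k+7) = Nat.fib (2*k+8) := by exact_mod_cast hC
  have hts : (2 * Nat.fib (k+7) : ℚ) / Nat.fib (2*k+6) ≤ Nat.fib (2*k+7) := by
    rw [div_le_iff₀ hapos]
    have h1 : Nat.fib (k+7) ≤ Nat.fib (2*k+7) := Nat.fib_mono (by omega)
    have h2 : 2 ≤ Nat.fib (2*k+6) := by
      calc 2 = Nat.fib 3 := rfl
        _ ≤ Nat.fib (2*k+6) := Nat.fib_mono (by omega)
    have h3 : 2 * Nat.fib (k+7) ≤ Nat.fib (2*k+7) * Nat.fib (2*k+6) := by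
      calc 2 * Nat.fib (k+7) ≤ Nat.fib (2*k+6) * Nat.fib (2*k+7) :=
            Nat.mul_le_mul h2 h1
        _ = Nat.fib (2*k+7) * Nat.fib (2*k+6) := Nat.mul_comm _ _
    exact_mod_cast h3
  have hlucaspos : (0:ℚ) < lucas (k+4) := by
    have : 0 < lucas (k+4) := by
      have := Nat.fib_pos.mpr (show 0 < k+5 by omega)
      omega
    exact_mod_cast this
  have hfpos : (0:ℚ) < Nat.fib (k+4) := by exact_mod_cast Nat.fib_pos.mpr (by omega)
  have hspos : (0:ℚ) < Nat.fib (2*k+7) := by exact_mod_cast Nat.fib_pos.mpr (by omega)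
  have htpos : (0:ℚ) < (2 * Nat.fib (k+7) : ℚ) / Nat.fib (2*k+6) := by
    apply div_pos _ hapos
    have : (0:ℚ) < Nat.fib (k+7) := by exact_mod_cast Nat.fib_pos.mpr (by omega)
    linarith
  have hct : (Nat.fib (2*k+6):ℚ) * ((2 * Nat.fib (k+7) : ℚ) / Nat.fib (2*k+6)) =
      2 * (Nat.fib (k+7) : ℚ) := by
    field_simp
  refine ⟨⟨(lucas (k+4) : ℚ), 2 * Nat.fib (k+4), 2 * Nat.fib (k+4), hlucaspos,
      by linarith, by linarith, le_refl _⟩,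
    ⟨(Nat.fib (2*k+6) : ℚ), Nat.fib (2*k+7), (2 * Nat.fib (k+7) : ℚ) / Nat.fib (2*k+6),
      hapos, hspos, htpos, hts⟩,
    rfl, rfl, rfl, rfl, rfl, rfl,
    ⟨⟨lucas (k+4), rfl⟩, ⟨2 * Nat.fib (k+4), by push_cast; ring⟩,
      ⟨2 * Nat.fib (2*k+8), by
        show ((2 * Nat.fib (2*k+8) : ℕ) : ℚ) = (lucas (k+4):ℚ) * (2 * Nat.fib (k+4))
        push_cast
        linear_combination -2 * hLq⟩⟩,
    ⟨⟨Nat.fib (2*k+6), rfl⟩, ⟨Nat.fib (2*k+7), rfl⟩,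
      ⟨2 * Nat.fib (k+7), by
        show ((2 * Nat.fib (k+7) : ℕ) : ℚ) =
          (Nat.fib (2*k+6):ℚ) * ((2 * Nat.fib (k+7) : ℚ) / Nat.fib (2*k+6))
        rw [hct]; push_cast; ring⟩⟩,
    ?_, ?_, ?_, ?_, hts⟩
  · show (lucas (k+4):ℚ) * (2 * Nat.fib (k+4)) = _
    linear_combination 2 * hLq
  · show 2 * (lucas (k+4):ℚ) + 2 * (2 * Nat.fib (k+4)) = _
    linear_combination hPq
  · show (lucas (k+4):ℚ) * (2 * Nat.fib (k+4)) = 2 * Nat.fib (2*k+6) + 2 * Nat.fib (2*k+7)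
    linear_combination 2 * hLq - 2 * hCq
  · show (Nat.fib (2*k+6):ℚ) * ((2 * Nat.fib (k+7) : ℚ) / Nat.fib (2*k+6)) =
      2 * (lucas (k+4):ℚ) + 2 * (2 * Nat.fib (k+4))
    rw [hct]
    linear_combination -hPq
end

section
/- There exist infinitely many pairwise distinct amicable pairs of Heronian parallelograms: the map n ↦ (H_n, C_n) for n > 3, with H_n the L_n × 2F_n rectangle and C_n as above, is injective. -/
def AmicablePair (X Y : Para) : Prop :=
  IsHeronian X ∧ IsHeronian Y ∧ X.area = Y.perim ∧ Y.area = X.perim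

lemma lucas_add_fib (n : ℕ) : lucas n + Nat.fib n = 2 * Nat.fib (n + 1) := by
  induction n using Nat.twoStepInduction with
  | zero => simp [lucas]
  | one => simp [lucas]
  | more n ih1 ih2 =>
    have h1 : Nat.fib (n + 2) = Nat.fib n + Nat.fib (n + 1) := Nat.fib_add_two
    have h2 : Nat.fib (n + 3) = Nat.fib (n + 1) + Nat.fib (n + 2) := Nat.fib_add_two
    have e1 : Nat.fib (n + 1 + 1) = Nat.fib (n + 2) := rfl
    have e2 : Nat.fib (n + 2 + 1) = Nat.fib (n + 3) := rfl
    simp only [lucas]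
    omega

lemma lucas_pos (n : ℕ) : 0 < lucas n := by
  have h := lucas_add_fib n
  have h2 : Nat.fib n ≤ Nat.fib (n + 1) := Nat.fib_le_fib_succ
  have h3 : 0 < Nat.fib (n + 1) := Nat.fib_pos.mpr n.succ_pos
  omega

lemma fib_two_mul' (n : ℕ) : Nat.fib (2 * n) = lucas n * Nat.fib n := by
  have h := lucas_add_fib n
  rw [Nat.fib_two_mul, show 2 * Nat.fib (n + 1) - Nat.fib n = lucas n from by omega,
    Nat.mul_comm]

lemma fib_n3 (n : ℕ) : Nat.fib (n + 3) = lucas n + 2 * Nat.fib n := by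
  have h := lucas_add_fib n
  have h1 : Nat.fib (n + 2) = Nat.fib n + Nat.fib (n + 1) := Nat.fib_add_two
  have h2 : Nat.fib (n + 3) = Nat.fib (n + 1) + Nat.fib (n + 2) := Nat.fib_add_two
  omega

lemma fib_inj {m n : ℕ} (hm : 2 ≤ m) (hn : 2 ≤ n) (h : Nat.fib m = Nat.fib n) : m = n := by
  rcases Nat.lt_trichotomy m n with hlt | he | hlt
  · have : Nat.fib m < Nat.fib (m + 1) := Nat.fib_lt_fib_succ hm
    have : Nat.fib (m + 1) ≤ Nat.fib n := Nat.fib_mono hlt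
    omega
  · exact he
  · have : Nat.fib n < Nat.fib (n + 1) := Nat.fib_lt_fib_succ hn
    have : Nat.fib (n + 1) ≤ Nat.fib m := Nat.fib_mono hlt
    omega

theorem infinitely_many_amicable_pairs :
    ∃ f : {n : ℕ // n > 3} → Para × Para,
      Function.Injective f ∧
      (∀ n, AmicablePair (f n).1 (f n).2) ∧
      (∀ n : {n : ℕ // n > 3},
        (f n).1.a = (lucas n.1 : ℚ) ∧ (f n).1.s = (2 * Nat.fib n.1 : ℚ) ∧
        (f n).1.t = (2 * Nat.fib n.1 : ℚ) ∧
        (f n).2.a = (Nat.fib (2 * n.1 - 2) : ℚ) ∧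
        (f n).2.s = (Nat.fib (2 * n.1 - 1) : ℚ) ∧
        (f n).2.t = (2 * Nat.fib (n.1 + 3) : ℚ) / (Nat.fib (2 * n.1 - 2) : ℚ)) := by
  have hfibpos : ∀ n : ℕ, 0 < n → (0 : ℚ) < Nat.fib n := fun n hn =>
    Nat.cast_pos.mpr (Nat.fib_pos.mpr hn)
  refine ⟨fun n =>
    (⟨(lucas n.1 : ℚ), (2 * Nat.fib n.1 : ℚ), (2 * Nat.fib n.1 : ℚ),
      Nat.cast_pos.mpr (lucas_pos n.1), ?_, ?_, le_refl _⟩,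
     ⟨(Nat.fib (2 * n.1 - 2) : ℚ), (Nat.fib (2 * n.1 - 1) : ℚ),
      (2 * Nat.fib (n.1 + 3) : ℚ) / (Nat.fib (2 * n.1 - 2) : ℚ), ?_, ?_, ?_, ?_⟩),
    ?_, ?_, fun n => ⟨rfl, rfl, rfl, rfl, rfl, rfl⟩⟩
  · have := hfibpos n.1 (by omega)
    positivity
  · have := hfibpos n.1 (by omega)
    positivity
  · exact hfibpos _ (by omega)
  · exact hfibpos _ (by omega)
  · have h1 := hfibpos (n.1 + 3) (by omega)
    have h2 := hfibpos (2 * n.1 - 2) (by omega)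
    positivity
  · -- t ≤ s for C
    obtain ⟨n, hn⟩ := n
    simp only
    rw [div_le_iff₀ (hfibpos _ (by omega))]
    have h1 : Nat.fib (n + 3) ≤ Nat.fib (2 * n - 1) := Nat.fib_mono (by omega)
    have h2 : 2 ≤ Nat.fib (2 * n - 2) := by
      calc 2 = Nat.fib 3 := rfl
        _ ≤ Nat.fib (2 * n - 2) := Nat.fib_mono (by omega)
    have : 2 * Nat.fib (n + 3) ≤ Nat.fib (2 * n - 2) * Nat.fib (2 * n - 1) :=
      Nat.mul_le_mul h2 h1
    calc (2 : ℚ) * Nat.fib (n + 3) ≤ (Nat.fib (2 * n - 2) * Nat.fib (2 * n - 1) : ℕ) := by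
          exact_mod_cast this
      _ = (Nat.fib (2 * n - 1) : ℚ) * Nat.fib (2 * n - 2) := by push_cast; ring
  · -- injectivity
    intro m n h
    have h1 : (2 * Nat.fib m.1 : ℚ) = (2 * Nat.fib n.1 : ℚ) := congrArg (fun p => p.1.s) h
    have h1' : 2 * Nat.fib m.1 = 2 * Nat.fib n.1 := by exact_mod_cast h1
    have h2 : Nat.fib m.1 = Nat.fib n.1 := by omega
    exact Subtype.ext (fib_inj (by omega : 2 ≤ m.1) (by omega : 2 ≤ n.1) h2)
  · -- amicable
    rintro ⟨n, hn⟩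
    obtain ⟨k, hk⟩ : ∃ k, n = k + 4 := ⟨n - 4, by omega⟩
    subst hk
    have hne : (Nat.fib (2 * (k + 4) - 2) : ℚ) ≠ 0 :=
      ne_of_gt (hfibpos _ (by omega))
    have harea2 : ((Nat.fib (2 * (k + 4) - 2) : ℚ)) *
        ((2 * Nat.fib (k + 4 + 3) : ℚ) / (Nat.fib (2 * (k + 4) - 2) : ℚ))
        = (2 * Nat.fib (k + 4 + 3) : ℚ) := mul_div_cancel₀ _ hne
    refine ⟨⟨⟨lucas (k + 4), rfl⟩, ⟨2 * Nat.fib (k + 4), by push_cast; ring⟩,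
        ⟨2 * Nat.fib (2 * (k + 4)), ?_⟩⟩,
      ⟨⟨Nat.fib (2 * (k + 4) - 2), rfl⟩, ⟨Nat.fib (2 * (k + 4) - 1), rfl⟩,
        ⟨2 * Nat.fib (k + 4 + 3), by rw [Para.area]; push_cast [harea2]; ring⟩⟩, ?_, ?_⟩
    · -- area H = 2 fib (2n)
      rw [Para.area]
      simp only
      rw [fib_two_mul']
      push_cast
      ring
    · -- area H = perim C
      rw [Para.area, Para.perim]
      simp only
      have e1 : 2 * (k + 4) - 2 = 2 * k + 6 := by omega
      have e2 : 2 * (k + 4) - 1 = 2 * k + 7 := by omega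
      have e3 : 2 * (k + 4) = 2 * k + 8 := by omega
      have hrec : Nat.fib (2 * k + 8) = Nat.fib (2 * k + 6) + Nat.fib (2 * k + 7) :=
        Nat.fib_add_two
      have h2n : Nat.fib (2 * (k + 4)) = lucas (k + 4) * Nat.fib (k + 4) := fib_two_mul' (k + 4)
      rw [e1, e2]
      have : (lucas (k + 4) : ℚ) * Nat.fib (k + 4) = Nat.fib (2 * k + 8) := by
        rw [e3] at h2n; exact_mod_cast h2n.symm
      rw [show ((lucas (k+4) : ℚ)) * (2 * Nat.fib (k+4)) = 2 * ((lucas (k+4):ℚ) * Nat.fib (k+4)) from by ring, this]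
      rw [show (Nat.fib (2*k+8) : ℚ) = (Nat.fib (2*k+6) : ℚ) + Nat.fib (2*k+7) from by exact_mod_cast hrec]
      ring
    · -- area C = perim H
      rw [Para.area, Para.perim]
      simp only
      rw [mul_div_cancel₀ _ hne]
      have h := fib_n3 (k + 4)
      have : (Nat.fib (k + 4 + 3) : ℚ) = lucas (k + 4) + 2 * Nat.fib (k + 4) := by
        exact_mod_cast h
      rw [show (2:ℚ) * Nat.fib (k+4+3) = 2 * ((Nat.fib (k+4+3)):ℚ) from by ring, this]
      ring
end
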